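/- Let n ≥ 1 and let (F, Σₙ, ⬠) be a pre-(n+2)-angulated category. Suppose the sequences X₀ →f₀→ X₁ →f₁→ ⋯ →fₙ→ X_{n+1} →f_{n+1}→ ΣₙX₀ and X₀ →f₀→ X₁ →f₁→ ⋯ →fₙ→ X_{n+1} →g_{n+1}→ ΣₙX₀ are both (n+2)-angles, i.e. they have the same objects and the same morphisms f₀, …, fₙ in positions 0 through n and differ at most in their connecting morphisms f_{n+1}, g_{n+1} : X_{n+1} → ΣₙX₀. If Hom_F(ΣₙX₀, X_{n+1}) = 0, then f_{n+1} = g_{n+1}. -/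

import Mathlib

/-!
By (F3) the identifications in positions `0` and `1` extend to a morphism of `(n+2)`-angles
`W → W'`. In an `(n+2)`-angle `d (i + 1)` is a weak cokernel of `d i` (map to a trivial
angle), so the components of this morphism can be corrected by homotopies, one position at a
time, until they agree with the identifications in positions `1, …, n`. The correction in
position `n + 1` factors through `W.X (n + 2) ≅ Σₙ X₀`, so it vanishes as
`Hom(Σₙ X₀, X_{n+1}) = 0`; the last square of the morphism then identifies the connecting
morphisms.
-/

open CategoryTheory CategoryTheory.Limits

universe v u

namespace NAng

instance (priority := 100) hasBinBiprod (C : Type u) [Category.{v} C] [Preadditive C]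
    [HasFiniteBiproducts C] : HasBinaryBiproducts C :=
  hasBinaryBiproducts_of_finite_biproducts C

variable {C : Type u} [Category.{v} C] [Preadditive C] [HasFiniteBiproducts C]

/-- A morphism `f : X ⟶ Y` lies in the radical if for every `g : Y ⟶ X` the
endomorphism `𝟙 X - f ≫ g` is invertible. -/
def InRad {X Y : C} (f : X ⟶ Y) : Prop :=
  ∀ g : Y ⟶ X, IsIso (𝟙 X - f ≫ g)

/-- A Krull–Schmidt category: every object is a finite direct sum of objects having
local endomorphism rings. -/
def KrullSchmidt (C : Type u) [Category.{v} C] [Preadditive C] [HasFiniteBiproducts C] : Prop :=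
  ∀ X : C, ∃ (k : ℕ) (Y : Fin k → C),
    Nonempty (X ≅ ⨁ Y) ∧ ∀ i, IsLocalRing (End (Y i))

/-- `Z ∈ add M`: `Z` is a retract of a finite direct sum of copies of `M`. -/
def InAdd (M Z : C) : Prop :=
  ∃ (k : ℕ) (ι : Z ⟶ ⨁ fun _ : Fin k => M) (π : (⨁ fun _ : Fin k => M) ⟶ Z),
    ι ≫ π = 𝟙 Z

variable (n : ℕ) (S : C ⥤ C)

/-- An "unrolled" candidate `(n+2)`-angle: an infinite complex which is
`(n+2)`-periodic up to `S` and the sign `(-1)ⁿ`.  The (n+2)-angle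
`X₀ → X₁ → ⋯ → X_{n+1} → S X₀` is recorded by the objects `X 0, …, X (n+1)`,
the maps `d 0, …, d n`, and the connecting morphism `d (n+1) ≫ (σ 0).hom`. -/
structure Cand where
  X : ℕ → C
  d : ∀ i, X i ⟶ X (i + 1)
  σ : ∀ i, X (n + 2 + i) ≅ S.obj (X i)
  compat : ∀ i, d (n + 2 + i) =
    (σ i).hom ≫ (((-1 : ℤ) ^ n) • S.map (d i)) ≫ (σ (i + 1)).inv

/-- A morphism of candidate `(n+2)`-angles. -/
structure CandHom (A B : Cand n S) where
  φ : ∀ i, A.X i ⟶ B.X i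
  comm : ∀ i, A.d i ≫ φ (i + 1) = φ i ≫ B.d i
  shift : ∀ i, φ (n + 2 + i) = (A.σ i).hom ≫ S.map (φ i) ≫ (B.σ i).inv

variable {n S}

/-- Rotation of a candidate `(n+2)`-angle. -/
def Cand.rot (A : Cand n S) : Cand n S where
  X i := A.X (i + 1)
  d i := A.d (i + 1)
  σ i := A.σ (i + 1)
  compat i := A.compat (i + 1)

/-- The connecting morphism `X_{n+1} ⟶ S X₀` of a candidate `(n+2)`-angle. -/
def Cand.conn (A : Cand n S) : A.X (n + 1) ⟶ S.obj (A.X 0) :=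
  A.d (n + 1) ≫ (A.σ 0).hom

variable (n S)

instance (priority := 100) preservesBinaryBiproductsOfAdditive {D : Type u} [Category.{v} D]
    [Preadditive D] (F : C ⥤ D) [F.Additive] : PreservesBinaryBiproducts F :=
  preservesBinaryBiproducts_of_preservesBiproducts F

/-- The differentials of the mapping cone of a morphism of candidate `(n+2)`-angles. -/
noncomputable def coneD {A B : Cand n S} (Φ : CandHom n S A B) (j : ℕ) :
    (A.X (j + 1)) ⊞ (B.X j) ⟶ (A.X (j + 2)) ⊞ (B.X (j + 1)) :=
  biprod.fst ≫ (-(A.d (j + 1))) ≫ biprod.inl +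
  biprod.fst ≫ Φ.φ (j + 1) ≫ biprod.inr +
  biprod.snd ≫ B.d j ≫ biprod.inr

/-- The periodicity isomorphisms of the mapping cone. -/
noncomputable def coneSigma [S.Additive] (A B : Cand n S) (j : ℕ) :
    (A.X (n + 2 + j + 1)) ⊞ (B.X (n + 2 + j)) ⟶ S.obj ((A.X (j + 1)) ⊞ (B.X j)) :=
  biprod.map (((-1 : ℤ) ^ n) • (A.σ (j + 1)).hom) ((B.σ j).hom) ≫
    (S.mapBiprod (A.X (j + 1)) (B.X j)).inv

/-- A pre-`(n+2)`-angulated structure: a class of `(n+2)`-angles satisfying the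
axioms (F1), (F2) and (F3) of Geiss–Keller–Oppermann. -/
structure PreAngulation where
  angles : Set (Cand n S)
  /-- (F1) closure under direct summands (hence under isomorphisms). -/
  retract_mem : ∀ {A B : Cand n S}, B ∈ angles →
    ∀ (ι : CandHom n S A B) (π : CandHom n S B A),
      (∀ i, ι.φ i ≫ π.φ i = 𝟙 (A.X i)) → A ∈ angles
  /-- (F1) closure under direct sums. -/
  sum_mem : ∀ {A B T : Cand n S}, A ∈ angles → B ∈ angles →
    ∀ (ιA : CandHom n S A T) (ιB : CandHom n S B T)
      (πA : CandHom n S T A) (πB : CandHom n S T B),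
      (∀ i, ιA.φ i ≫ πA.φ i = 𝟙 (A.X i)) →
      (∀ i, ιB.φ i ≫ πB.φ i = 𝟙 (B.X i)) →
      (∀ i, ιA.φ i ≫ πB.φ i = 0) →
      (∀ i, ιB.φ i ≫ πA.φ i = 0) →
      (∀ i, πA.φ i ≫ ιA.φ i + πB.φ i ≫ ιB.φ i = 𝟙 (T.X i)) →
      T ∈ angles
  /-- (F1) trivial `(n+2)`-angles belong to the class. -/
  triv_mem : ∀ T : Cand n S, IsIso (T.d 0) →
    (∀ j, 2 ≤ j → j ≤ n + 1 → IsZero (T.X j)) → T ∈ angles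
  /-- (F1) every morphism is the first morphism of some `(n+2)`-angle. -/
  complete : ∀ {X₀ X₁ : C} (f : X₀ ⟶ X₁),
    ∃ A ∈ angles, ∃ (e₀ : Cand.X A 0 ≅ X₀) (e₁ : Cand.X A 1 ≅ X₁),
      Cand.d A 0 = e₀.hom ≫ f ≫ e₁.inv
  /-- (F2) a candidate is an `(n+2)`-angle iff its rotation is. -/
  rot_mem : ∀ A : Cand n S, A ∈ angles ↔ A.rot ∈ angles
  /-- (F3) completion of commutative squares to morphisms of `(n+2)`-angles. -/
  ext_hom : ∀ {A B : Cand n S}, A ∈ angles → B ∈ angles →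
    ∀ (φ₀ : Cand.X A 0 ⟶ Cand.X B 0) (φ₁ : Cand.X A 1 ⟶ Cand.X B 1),
      Cand.d A 0 ≫ φ₁ = φ₀ ≫ Cand.d B 0 →
      ∃ Φ : CandHom n S A B, Φ.φ 0 = φ₀ ∧ Φ.φ 1 = φ₁

/-- An `(n+2)`-angulated structure: a pre-`(n+2)`-angulated structure satisfying
moreover the higher octahedral axiom, in the "good morphism"/mapping cone form of
Bergh–Thaule (equivalent to (F4) and to (N4*)). -/
structure Angulation [S.Additive] extends PreAngulation n S where
  octa : ∀ {A B : Cand n S}, A ∈ angles → B ∈ angles →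
    ∀ (φ₀ : Cand.X A 0 ⟶ Cand.X B 0) (φ₁ : Cand.X A 1 ⟶ Cand.X B 1),
      Cand.d A 0 ≫ φ₁ = φ₀ ≫ Cand.d B 0 →
      ∃ Φ : CandHom n S A B, Φ.φ 0 = φ₀ ∧ Φ.φ 1 = φ₁ ∧
        ∃ T ∈ angles, ∃ e : ∀ j, Cand.X T j ≅ (Cand.X A (j + 1)) ⊞ (Cand.X B j),
          (∀ j, Cand.d T j = (e j).hom ≫ coneD n S Φ j ≫ (e (j + 1)).inv) ∧
          (∀ j, (Cand.σ T j).hom =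
            (e (n + 2 + j)).hom ≫ coneSigma n S A B j ≫ S.map (e j).inv)

/-- A full subcategory (given by a predicate on objects) is additive if it contains
the zero objects and is closed under binary direct sums and direct summands. -/
def AddClosed (P : C → Prop) : Prop :=
  (∀ X : C, IsZero X → P X) ∧
  (∀ X Y : C, P X → P Y → P (X ⊞ Y)) ∧
  (∀ X Y : C, P Y → ∀ (i : X ⟶ Y) (r : Y ⟶ X), i ≫ r = 𝟙 X → P X)

/-- The subcategory `P` is `n`-extension closed with respect to the class `ang` of
`(n+2)`-angles. -/
def ExtClosed (P : C → Prop) (ang : Set (Cand n S)) : Prop :=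
  ∀ {A₀ Atop : C}, P A₀ → P Atop → ∀ f : Atop ⟶ S.obj A₀,
    ∃ W ∈ ang, ∃ (e₀ : Cand.X W 0 ≅ A₀) (etop : Cand.X W (n + 1) ≅ Atop),
      (∀ j, 1 ≤ j → j ≤ n → P (Cand.X W j)) ∧
      Cand.conn W = etop.hom ≫ f ≫ S.map e₀.inv

/-- The candidate `(n+2)`-angle `W` matches the finite complex `(X, d)` in
positions `0, …, n+1`. -/
def Matches (W : Cand n S) (X : ℕ → C) (d : ∀ i, X i ⟶ X (i + 1)) : Prop :=
  ∃ e : ∀ j, j ≤ n + 1 → (Cand.X W j ≅ X j),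
    ∀ j (h : j + 1 ≤ n + 1),
      Cand.d W j = (e j (Nat.le_of_succ_le h)).hom ≫ d j ≫ (e (j + 1) h).inv

/-- `(X, d)` is an `𝒜`-conflation: a complex with terms in `P` which can be
completed to an `(n+2)`-angle. -/
def IsConflation (P : C → Prop) (ang : Set (Cand n S))
    (X : ℕ → C) (d : ∀ i, X i ⟶ X (i + 1)) : Prop :=
  (∀ j, j ≤ n + 1 → P (X j)) ∧ ∃ W ∈ ang, Matches n S W X d

/-- An `𝒜`-inflation: a morphism in position `0` of some `𝒜`-conflation. -/
def IsInflation (P : C → Prop) (ang : Set (Cand n S)) {X₀ X₁ : C} (f : X₀ ⟶ X₁) : Prop :=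
  ∃ (X : ℕ → C) (d : ∀ i, X i ⟶ X (i + 1)), IsConflation n S P ang X d ∧
    ∃ (e₀ : X 0 ≅ X₀) (e₁ : X 1 ≅ X₁), d 0 = e₀.hom ≫ f ≫ e₁.inv

/-- An `𝒜`-deflation: a morphism in position `n` of some `𝒜`-conflation. -/
def IsDeflation (P : C → Prop) (ang : Set (Cand n S)) {Y₀ Y₁ : C} (f : Y₀ ⟶ Y₁) : Prop :=
  ∃ (X : ℕ → C) (d : ∀ i, X i ⟶ X (i + 1)), IsConflation n S P ang X d ∧
    ∃ (e₀ : X n ≅ Y₀) (e₁ : X (n + 1) ≅ Y₁), d n = e₀.hom ≫ f ≫ e₁.inv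

variable {n S}

end NAng

namespace NAng

variable {C : Type u} [Category.{v} C] [Preadditive C] [HasFiniteBiproducts C]

/-- `g` is a weak cokernel of `f` (in the ambient category). -/
def IsWeakCokernel {X Y Z : C} (f : X ⟶ Y) (g : Y ⟶ Z) : Prop :=
  f ≫ g = 0 ∧ ∀ (W : C) (h : Y ⟶ W), f ≫ h = 0 → ∃ k : Z ⟶ W, h = g ≫ k

/-- `f` is a weak kernel of `g` (in the ambient category). -/
def IsWeakKernel {X Y Z : C} (f : X ⟶ Y) (g : Y ⟶ Z) : Prop :=
  f ≫ g = 0 ∧ ∀ (W : C) (h : W ⟶ Y), h ≫ g = 0 → ∃ k : W ⟶ X, h = k ≫ f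

/-- `g` is a weak cokernel of `f` in the full subcategory `P`. -/
def WeakCokernelIn (P : C → Prop) {X Y Z : C} (f : X ⟶ Y) (g : Y ⟶ Z) : Prop :=
  f ≫ g = 0 ∧ ∀ (W : C), P W → ∀ h : Y ⟶ W, f ≫ h = 0 → ∃ k : Z ⟶ W, h = g ≫ k

/-- `f` is a weak kernel of `g` in the full subcategory `P`. -/
def WeakKernelIn (P : C → Prop) {X Y Z : C} (f : X ⟶ Y) (g : Y ⟶ Z) : Prop :=
  f ≫ g = 0 ∧ ∀ (W : C), P W → ∀ h : W ⟶ Y, h ≫ g = 0 → ∃ k : W ⟶ X, h = k ≫ f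

/-- `f` is a monomorphism in the full subcategory `P`. -/
def MonoIn (P : C → Prop) {X Y : C} (f : X ⟶ Y) : Prop :=
  ∀ (W : C), P W → ∀ a b : W ⟶ X, a ≫ f = b ≫ f → a = b

/-- `f` is an epimorphism in the full subcategory `P`. -/
def EpiIn (P : C → Prop) {X Y : C} (f : X ⟶ Y) : Prop :=
  ∀ (W : C), P W → ∀ a b : Y ⟶ W, f ≫ a = f ≫ b → a = b

variable (n : ℕ)

/-- `(X, d)` (positions `0, …, n+1`) is an `n`-exact sequence in the full additive
subcategory `P`. -/
def IsNExact (P : C → Prop) (X : ℕ → C) (d : ∀ i, X i ⟶ X (i + 1)) : Prop :=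
  (∀ j, j ≤ n + 1 → P (X j)) ∧
  MonoIn P (d 0) ∧ EpiIn P (d n) ∧
  (∀ i, i < n → WeakCokernelIn P (d i) (d (i + 1))) ∧
  (∀ i, i < n → WeakKernelIn P (d i) (d (i + 1)))

/-- An `n`-pushout diagram in the sense of Jasso, of the rows
`X 0 → ⋯ → X n` and `Y 0 → ⋯ → Y n` along the vertical morphisms `φ`. -/
def IsNPushout (P : C → Prop) (X : ℕ → C) (dX : ∀ i, X i ⟶ X (i + 1))
    (Y : ℕ → C) (dY : ∀ i, Y i ⟶ Y (i + 1)) (φ : ∀ k, X k ⟶ Y k) : Prop :=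
  (∀ k, k < n → dX k ≫ φ (k + 1) = φ k ≫ dY k) ∧
  ∃ (Q : ℕ → C) (dQ : ∀ i, Q i ⟶ Q (i + 1)) (α₀ : Q 0 ≅ X 0)
    (α : ∀ k, 1 ≤ k → k ≤ n → (Q k ≅ (X k) ⊞ (Y (k - 1)))) (αtop : Q (n + 1) ≅ Y n),
    (∀ h : 1 ≤ n,
      dQ 0 = α₀.hom ≫ biprod.lift (-(dX 0)) (φ 0) ≫ (α 1 le_rfl h).inv) ∧
    (∀ j, (h : j + 2 ≤ n) →
      dQ (j + 1) = (α (j + 1) (by omega) (by omega)).hom ≫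
        (biprod.fst ≫ (-(dX (j + 1))) ≫ biprod.inl +
         biprod.fst ≫ φ (j + 1) ≫ biprod.inr +
         biprod.snd ≫ dY j ≫ biprod.inr) ≫ (α (j + 2) (by omega) h).inv) ∧
    (∀ j, (h : j + 1 = n) →
      dQ (j + 1) = (α (j + 1) (by omega) (by omega)).hom ≫
        biprod.desc (φ (j + 1)) (dY j) ≫ eqToHom (by rw [h]) ≫ αtop.inv ≫
          eqToHom (by rw [h])) ∧
    (∀ k, k < n → WeakCokernelIn P (dQ k) (dQ (k + 1)))

/-- An `n`-pullback diagram in the sense of Jasso, of the rows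
`X 1 → ⋯ → X (n+1)` and `Y 1 → ⋯ → Y (n+1)` along the vertical morphisms `ψ`. -/
def IsNPullback (P : C → Prop) (X : ℕ → C) (dX : ∀ i, X i ⟶ X (i + 1))
    (Y : ℕ → C) (dY : ∀ i, Y i ⟶ Y (i + 1)) (ψ : ∀ k, Y k ⟶ X k) : Prop :=
  (∀ k, 1 ≤ k → k ≤ n → dY k ≫ ψ (k + 1) = ψ k ≫ dX k) ∧
  ∃ (Q : ℕ → C) (dQ : ∀ i, Q i ⟶ Q (i + 1)) (α₀ : Q 0 ≅ Y 1)
    (α : ∀ k, 1 ≤ k → k ≤ n → (Q k ≅ (Y (k + 1)) ⊞ (X k))) (αtop : Q (n + 1) ≅ X (n + 1)),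
    (∀ h : 1 ≤ n,
      dQ 0 = α₀.hom ≫ biprod.lift (-(dY 1)) (ψ 1) ≫ (α 1 le_rfl h).inv) ∧
    (∀ k, (h1 : 1 ≤ k) → (h : k + 1 ≤ n) →
      dQ k = (α k h1 (by omega)).hom ≫
        (biprod.fst ≫ (-(dY (k + 1))) ≫ biprod.inl +
         biprod.fst ≫ ψ (k + 1) ≫ biprod.inr +
         biprod.snd ≫ dX k ≫ biprod.inr) ≫ (α (k + 1) (by omega) h).inv) ∧
    (∀ h : 1 ≤ n,
      dQ n = (α n h le_rfl).hom ≫ biprod.desc (ψ (n + 1)) (dX n) ≫ αtop.inv) ∧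
    (∀ k, k < n → WeakKernelIn P (dQ k) (dQ (k + 1)))

end NAng

namespace NAng

open ZeroObject

variable {C : Type u} [Category.{v} C] {n : ℕ} {S : C ⥤ C}

section Trivial

variable [HasZeroObject C]

variable (n S) in
/-- The objects of the trivial `(n+2)`-angle with an identity in positions `p → p + 1`,
unrolled `(n+2)`-periodically up to `S`. -/
noncomputable def trivObj (p : ℕ) (V : C) (i : ℕ) : C :=
  S.obj^[i / (n + 2)] (if i % (n + 2) = p ∨ i % (n + 2) = p + 1 then V else 0)

lemma trivObj_of_lt {p : ℕ} (V : C) {i : ℕ} (hi : i < n + 2) :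
    trivObj n S p V i = if i = p ∨ i = p + 1 then V else 0 := by
  rw [trivObj, Nat.div_eq_of_lt hi, Nat.mod_eq_of_lt hi, Function.iterate_zero_apply]

lemma trivObj_succ_of_mod_eq {p : ℕ} (hp : p ≤ n) (V : C) {i : ℕ} (h : i % (n + 2) = p) :
    trivObj n S p V i = trivObj n S p V (i + 1) := by
  have hi : i + 1 = (p + 1) + (n + 2) * (i / (n + 2)) := by
    have := Nat.div_add_mod i (n + 2)
    omega
  have hmod : (i + 1) % (n + 2) = p + 1 := by
    rw [hi, Nat.add_mul_mod_self_left, Nat.mod_eq_of_lt (by omega)]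
  have hdiv : (i + 1) / (n + 2) = i / (n + 2) := by
    rw [hi, Nat.add_mul_div_left _ _ (by omega), Nat.div_eq_of_lt (by omega), Nat.zero_add]
  rw [trivObj, trivObj, h, hmod, hdiv, if_pos (Or.inl rfl), if_pos (Or.inr rfl)]

lemma trivObj_add_period (p : ℕ) (V : C) (i : ℕ) :
    trivObj n S p V (n + 2 + i) = S.obj (trivObj n S p V i) := by
  rw [trivObj, trivObj, Nat.add_comm, Nat.add_mod_right, Nat.add_div_right _ (by omega),
    Function.iterate_succ_apply']

variable [Preadditive C]

lemma isZero_iterate_obj_zero [S.PreservesZeroMorphisms] (k : ℕ) :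
    IsZero (S.obj^[k] (0 : C)) := by
  induction k with
  | zero => exact isZero_zero C
  | succ k ih => simpa only [Function.iterate_succ_apply'] using S.map_isZero ih

lemma isZero_trivObj [S.PreservesZeroMorphisms] {p : ℕ} (V : C) {i : ℕ}
    (h : ¬(i % (n + 2) = p ∨ i % (n + 2) = p + 1)) :
    IsZero (trivObj n S p V i) := by
  rw [trivObj, if_neg h]
  exact isZero_iterate_obj_zero _

variable (n S) in
/-- The trivial `(n+2)`-angle `0 → ⋯ → 0 → V → V → 0 → ⋯ → 0` with the identity of `V` in
positions `p → p + 1`; the sign makes the unrolled complex `(-1)ⁿ`-periodic. -/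
noncomputable def triv [S.Additive] (p : ℕ) (hp : p ≤ n) (V : C) : Cand n S where
  X := trivObj n S p V
  d i := if h : i % (n + 2) = p then
      ((-1 : ℤ) ^ (n * (i / (n + 2)))) • eqToHom (trivObj_succ_of_mod_eq hp V h) else 0
  σ i := eqToIso (trivObj_add_period p V i)
  compat i := by
    have hmod : (n + 2 + i) % (n + 2) = i % (n + 2) := by
      rw [Nat.add_comm, Nat.add_mod_right]
    have hdiv : (n + 2 + i) / (n + 2) = i / (n + 2) + 1 := by
      rw [Nat.add_comm, Nat.add_div_right _ (by omega)]
    by_cases h : i % (n + 2) = p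
    · rw [dif_pos (hmod.trans h), dif_pos h, hdiv]
      simp only [eqToIso.hom, eqToIso.inv, Functor.map_zsmul, eqToHom_map,
        Preadditive.comp_zsmul, Preadditive.zsmul_comp, smul_smul, eqToHom_trans, ← pow_add]
      congr 2
      ring
    · rw [dif_neg (fun hc => h (hmod.symm.trans hc)), dif_neg h]
      simp

variable [S.Additive] {p : ℕ} (hp : p ≤ n) (V : C)

noncomputable def trivIsoSelf : (triv n S p hp V).X p ≅ V :=
  eqToIso ((trivObj_of_lt V (by omega)).trans (if_pos (Or.inl rfl)))

noncomputable def trivIsoSucc : (triv n S p hp V).X (p + 1) ≅ V :=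
  eqToIso ((trivObj_of_lt V (by omega)).trans (if_pos (Or.inr rfl)))

lemma triv_d_self :
    (triv n S p hp V).d p = (trivIsoSelf hp V).hom ≫ (trivIsoSucc hp V).inv := by
  have hmod : p % (n + 2) = p := Nat.mod_eq_of_lt (by omega)
  simp [triv, trivIsoSelf, trivIsoSucc, hmod, Nat.div_eq_of_lt (show p < n + 2 by omega)]

lemma triv_d_succ : (triv n S p hp V).d (p + 1) = 0 :=
  dif_neg (by rw [Nat.mod_eq_of_lt (by omega)]; omega)

end Trivial

namespace PreAngulation

variable [Preadditive C] (PRE : PreAngulation n S)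

lemma mem_of_isIso_d (k : ℕ) (A : Cand n S) (hk : IsIso (A.d k))
    (hzero : ∀ j, k + 2 ≤ j → j ≤ k + n + 1 → IsZero (A.X j)) : A ∈ PRE.angles := by
  induction k generalizing A with
  | zero => exact PRE.triv_mem A hk fun j hj hj' => hzero j (by omega) (by omega)
  | succ k ih =>
    exact (PRE.rot_mem A).mpr (ih A.rot hk fun j hj hj' => hzero (j + 1) (by omega) (by omega))

variable [HasZeroObject C] [S.Additive]

lemma mem_triv {p : ℕ} (hp : p ≤ n) (V : C) : triv n S p hp V ∈ PRE.angles := by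
  refine PRE.mem_of_isIso_d p _ ?_ fun j hj hj' => isZero_trivObj V ?_
  · rw [triv_d_self]
    infer_instance
  · rcases lt_or_ge j (n + 2) with h | h
    · rw [Nat.mod_eq_of_lt h]; omega
    · rw [Nat.mod_eq_sub_mod h, Nat.mod_eq_of_lt (by omega)]; omega

/-- Map the trivial angle `A.X 0 = A.X 0 → 0 → ⋯` to `A`. -/
lemma d_comp_d {A : Cand n S} (hA : A ∈ PRE.angles) (i : ℕ) : A.d i ≫ A.d (i + 1) = 0 := by
  induction i generalizing A with
  | zero =>
    let T := triv n S 0 (Nat.zero_le n) (A.X 0)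
    obtain ⟨Φ, -, hΦ1⟩ := PRE.ext_hom (PRE.mem_triv _ _) hA (trivIsoSelf _ _).hom
      ((trivIsoSucc _ _).hom ≫ A.d 0) (by simp [triv_d_self])
    have hcomm : T.d 1 ≫ Φ.φ 2 = Φ.φ 1 ≫ A.d 1 := Φ.comm 1
    rw [triv_d_succ, hΦ1, zero_comp, Category.assoc] at hcomm
    simpa using hcomm.symm
  | succ i ih => exact ih ((PRE.rot_mem A).mp hA)

/-- Map `A` to the trivial angle `0 → V = V → 0 → ⋯`, which needs `n + 1 ≥ 2`. -/
lemma coyoneda_exact (hn : 1 ≤ n) {A : Cand n S} (hA : A ∈ PRE.angles) (i : ℕ) {V : C}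
    (h : A.X (i + 1) ⟶ V) (hh : A.d i ≫ h = 0) :
    ∃ s : A.X (i + 2) ⟶ V, h = A.d (i + 1) ≫ s := by
  induction i generalizing A with
  | zero =>
    let T := triv n S 1 hn V
    obtain ⟨Φ, -, hΦ1⟩ := PRE.ext_hom hA (PRE.mem_triv hn V) 0 (h ≫ (trivIsoSelf hn V).inv)
      (by rw [zero_comp, ← Category.assoc, hh, zero_comp])
    have hcomm : A.d 1 ≫ Φ.φ 2 = Φ.φ 1 ≫ T.d 1 := Φ.comm 1
    rw [hΦ1, triv_d_self] at hcomm
    exact ⟨Φ.φ 2 ≫ (trivIsoSucc hn V).hom, by simp [reassoc_of% hcomm]⟩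
  | succ i ih => exact ih ((PRE.rot_mem A).mp hA) h hh

section ConnectingMorphism

variable {PRE} (hn : 1 ≤ n)
  {A B : Cand n S} (hA : A ∈ PRE.angles) (hB : B ∈ PRE.angles)
  (u : ∀ i, A.X i ⟶ B.X i) (hu : ∀ i ≤ n, A.d i ≫ u (i + 1) = u i ≫ B.d i)

include hn hA hB hu in
/-- Correct an (F3)-extension of `(u 0, u 1)` by homotopies, one position at a time; the
correction at `m + 1` exists because `d (m + 1)` is a weak cokernel of `d m`. -/
lemma exists_extension_agreeing_at (m : ℕ) (hm1 : 1 ≤ m) (hm : m ≤ n) :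
    ∃ c : ∀ i, A.X i ⟶ B.X i, c m = u m ∧
      (∀ i, m ≤ i → i ≤ n + 1 → A.d i ≫ c (i + 1) = c i ≫ B.d i) ∧
      c (n + 2) = (A.σ 0).hom ≫ S.map (u 0) ≫ (B.σ 0).inv := by
  induction m, hm1 using Nat.le_induction with
  | base =>
    obtain ⟨Φ, hΦ0, hΦ1⟩ := PRE.ext_hom hA hB (u 0) (u 1) (hu 0 (Nat.zero_le n))
    exact ⟨Φ.φ, hΦ1, fun i _ _ => Φ.comm i, by simpa [hΦ0] using Φ.shift 0⟩
  | succ m hm1 ih =>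
    obtain ⟨c, hcm, hcomm, hshift⟩ := ih (by omega)
    have hδ : A.d m ≫ (c (m + 1) - u (m + 1)) = 0 := by
      rw [Preadditive.comp_sub, hcomm m le_rfl (by omega), hcm, hu m (by omega), sub_self]
    obtain ⟨s, hs⟩ := PRE.coyoneda_exact hn hA m _ hδ
    refine ⟨Function.update (Function.update c (m + 1) (u (m + 1))) (m + 2)
      (c (m + 2) - s ≫ B.d (m + 1)), by simp, fun i hi1 hi2 => ?_,
      by rw [Function.update_of_ne (by omega), Function.update_of_ne (by omega), hshift]⟩
    rcases (show i = m + 1 ∨ i = m + 2 ∨ m + 3 ≤ i by omega) with rfl | rfl | hi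
    · simp only [Function.update_self, Function.update_of_ne (show m + 1 ≠ m + 2 by omega)]
      rw [Preadditive.comp_sub, hcomm (m + 1) (by omega) hi2, ← Category.assoc, ← hs,
        Preadditive.sub_comp, sub_sub_cancel]
    · simp only [Function.update_self, Function.update_of_ne (show m + 2 + 1 ≠ m + 2 by omega),
        Function.update_of_ne (show m + 2 + 1 ≠ m + 1 by omega)]
      rw [Preadditive.sub_comp, Category.assoc, PRE.d_comp_d hB, comp_zero, sub_zero]
      exact hcomm (m + 2) (by omega) hi2
    · simp only [Function.update_of_ne (show i ≠ m + 1 by omega),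
        Function.update_of_ne (show i ≠ m + 2 by omega),
        Function.update_of_ne (show i + 1 ≠ m + 1 by omega),
        Function.update_of_ne (show i + 1 ≠ m + 2 by omega)]
      exact hcomm i (by omega) hi2

include hn hA hB hu in
/-- The last homotopy correction factors through `A.X (n + 2) ≅ S A₀`, hence vanishes. -/
lemma conn_comp_map_eq (hvanish : ∀ h : S.obj (A.X 0) ⟶ B.X (n + 1), h = 0) :
    A.conn ≫ S.map (u 0) = u (n + 1) ≫ B.conn := by
  obtain ⟨c, hcn, hcomm, hshift⟩ := exists_extension_agreeing_at hn hA hB u hu n hn le_rfl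
  have hδ : A.d n ≫ (c (n + 1) - u (n + 1)) = 0 := by
    rw [Preadditive.comp_sub, hcomm n le_rfl (by omega), hcn, hu n le_rfl, sub_self]
  obtain ⟨s, hs⟩ := PRE.coyoneda_exact hn hA n _ hδ
  have hs0 : s = 0 := by
    rw [← Iso.hom_inv_id_assoc (A.σ 0) s, hvanish ((A.σ 0).inv ≫ s), comp_zero]
  have hcn1 : c (n + 1) = u (n + 1) := by
    rwa [hs0, comp_zero, sub_eq_zero] at hs
  have hlast := hcomm (n + 1) (by omega) le_rfl
  rw [hshift, hcn1] at hlast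
  simp only [Cand.conn, Category.assoc, ← reassoc_of% hlast, Iso.inv_hom_id, Category.comp_id]

end ConnectingMorphism

end PreAngulation

/-- In a pre-`(n+2)`-angulated category, if two `(n+2)`-angles have the
same objects `X 0, …, X (n+1)` and the same morphisms `d 0, …, d n` in positions `0`
through `n`, and if `Hom(Σₙ X₀, X_{n+1}) = 0`, then their connecting morphisms agree. -/
theorem statement_4 {C : Type u} [Category.{v} C] [Preadditive C] [HasFiniteBiproducts C]
    (n : ℕ) (hn : 1 ≤ n) (e : C ≌ C)
    (PRE : PreAngulation n e.functor)
    (X : ℕ → C) (d : ∀ i, X i ⟶ X (i + 1))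
    (W W' : Cand n e.functor) (hW : W ∈ PRE.angles) (hW' : W' ∈ PRE.angles)
    (ew : ∀ j, j ≤ n + 1 → (W.X j ≅ X j)) (ew' : ∀ j, j ≤ n + 1 → (W'.X j ≅ X j))
    (hw : ∀ j (h : j + 1 ≤ n + 1),
      W.d j = (ew j (Nat.le_of_succ_le h)).hom ≫ d j ≫ (ew (j + 1) h).inv)
    (hw' : ∀ j (h : j + 1 ≤ n + 1),
      W'.d j = (ew' j (Nat.le_of_succ_le h)).hom ≫ d j ≫ (ew' (j + 1) h).inv)
    (hvanish : ∀ h : e.functor.obj (X 0) ⟶ X (n + 1), h = 0) :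
    (ew (n + 1) le_rfl).inv ≫ Cand.conn W ≫ e.functor.map (ew 0 (Nat.zero_le _)).hom =
      (ew' (n + 1) le_rfl).inv ≫ Cand.conn W' ≫ e.functor.map (ew' 0 (Nat.zero_le _)).hom := by
  have := Functor.additive_of_preserves_binary_products e.functor
  let u : ∀ i, W.X i ⟶ W'.X i := fun i =>
    if h : i ≤ n + 1 then (ew i h).hom ≫ (ew' i h).inv else 0
  have hu : ∀ i ≤ n, W.d i ≫ u (i + 1) = u i ≫ W'.d i := fun i hi => by
    simp [u, hw i (by omega), hw' i (by omega), hi, show i ≤ n + 1 by omega]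
  have hvanish' : ∀ h : e.functor.obj (W.X 0) ⟶ W'.X (n + 1), h = 0 := fun h => by
    rw [← cancel_epi (e.functor.map (ew 0 (Nat.zero_le _)).inv),
      ← cancel_mono (ew' (n + 1) le_rfl).hom, Category.assoc, hvanish (_ ≫ h ≫ _)]
    simp
  have hconn := PreAngulation.conn_comp_map_eq hn hW hW' u hu hvanish'
  simp only [u, dif_pos (Nat.zero_le _), dif_pos (le_refl (n + 1))] at hconn
  rw [← cancel_mono (e.functor.map (ew' 0 (Nat.zero_le _)).inv)]
  simp only [Category.assoc, ← Functor.map_comp, hconn, Iso.inv_hom_id_assoc, Iso.hom_inv_id]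
  rw [CategoryTheory.Functor.map_id, Category.comp_id]

end NAng
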